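/- arXiv:0704.2381 — 2 statements merged into one kernel-verified Lean document; each statement's English description precedes it below -/
import Mathlib

section
/- If W is a right infinite word on a finite alphabet such that for some n the number of distinct subwords of W of length n is at most n, then W is ultimately periodic. -/
/-- The factor (subword) of the right infinite word `W` starting at position `i`, of length `n`. -/
def FactorAt {X : Type*} (W : ℕ → X) (i n : ℕ) : List X :=
  (List.range n).map fun k => W (i + k)

/-- The finite word `u` occurs in `W` at position `i`. -/
def OccursAt {X : Type*} (W : ℕ → X) (u : List X) (i : ℕ) : Prop :=
  FactorAt W i u.length = u

/-- `u` is a (finite) subword of the right infinite word `W`. -/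
def IsFactor {X : Type*} (W : ℕ → X) (u : List X) : Prop :=
  ∃ i, OccursAt W u i

/-- A right infinite word is prime if every finite subword occurs infinitely often. -/
def IsPrimeWord {X : Type*} (W : ℕ → X) : Prop :=
  ∀ u, IsFactor W u → ∀ N, ∃ i, N ≤ i ∧ OccursAt W u i

/-- `W` is ultimately periodic. -/
def UltPeriodic {X : Type*} (W : ℕ → X) : Prop :=
  ∃ N p, 1 ≤ p ∧ ∀ i, N ≤ i → W (i + p) = W i

/-- `k`-fold concatenation power of a finite word. -/
def wpow {X : Type*} (w : List X) (k : ℕ) : List X := (List.replicate k w).flatten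

/-- The periodic right infinite word `w^ω`. -/
def perWord {X : Type*} [Inhabited X] (w : List X) : ℕ → X :=
  fun n => w.getD (n % w.length) default

/-- The right infinite word `w₁ w₂^ω`. -/
def glueWord {X : Type*} [Inhabited X] (w₁ w₂ : List X) : ℕ → X := fun n =>
  if n < w₁.length then w₁.getD n default
  else w₂.getD ((n - w₁.length) % w₂.length) default

/-- The right infinite word obtained by prefixing `U` with the finite word `w`. -/
def prependWord {X : Type*} (w : List X) (U : ℕ → X) : ℕ → X := fun n =>
  if n < w.length then w.getD n (U 0) else U (n - w.length)

/-- The finite word `w` is a prefix of the right infinite word `U`. -/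
def HasPrefixWord {X : Type*} (U : ℕ → X) (w : List X) : Prop :=
  FactorAt U 0 w.length = w


/-!
Morse–Hedlund. The number `p m` of length-`m` factors of `W` is nondecreasing in `m`, since each
length-`m` factor is the prefix of a length-`(m + 1)` factor, and `p 0 = 1`. So `p n ≤ n` forces
`p (m + 1) = p m` for some `m`: then every length-`m` factor has a unique one-letter extension,
i.e. the length-`m` factor at a position determines the next letter. Two positions carrying the
same length-`m` factor (pigeonhole) therefore carry the same infinite suffix.
-/

section Complexity

variable {X : Type*} (W : ℕ → X)

def factorSet (m : ℕ) : Set (List X) := {u : List X | u.length = m ∧ IsFactor W u}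

@[simp] lemma factorAt_length (i m : ℕ) : (FactorAt W i m).length = m := by
  simp [FactorAt]

lemma factorAt_eq_factorAt_iff {i j m : ℕ} :
    FactorAt W i m = FactorAt W j m ↔ ∀ t < m, W (i + t) = W (j + t) := by
  simp [FactorAt, List.ext_getElem_iff]

lemma take_factorAt_succ (i m : ℕ) : (FactorAt W i (m + 1)).take m = FactorAt W i m := by
  rw [FactorAt, ← List.map_take, List.take_range, min_eq_left (Nat.le_succ m), FactorAt]

lemma mem_factorSet_iff {m : ℕ} {u : List X} : u ∈ factorSet W m ↔ ∃ i, FactorAt W i m = u := by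
  constructor
  · rintro ⟨rfl, i, hi⟩
    exact ⟨i, hi⟩
  · rintro ⟨i, rfl⟩
    exact ⟨factorAt_length W i m, i, by simp [OccursAt]⟩

lemma factorAt_mem_factorSet (i m : ℕ) : FactorAt W i m ∈ factorSet W m :=
  (mem_factorSet_iff W).2 ⟨i, rfl⟩

lemma factorSet_finite [Finite X] (m : ℕ) : (factorSet W m).Finite :=
  (List.finite_length_eq X m).subset fun _ hu => hu.1

lemma factorSet_zero : factorSet W 0 = {[]} := by
  ext u
  simp only [mem_factorSet_iff, Set.mem_singleton_iff]
  exact ⟨fun ⟨i, hi⟩ => by simp [← hi, FactorAt], fun hu => ⟨0, by simp [hu, FactorAt]⟩⟩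

lemma image_take_factorSet_succ (m : ℕ) : List.take m '' factorSet W (m + 1) = factorSet W m := by
  ext u
  simp only [Set.mem_image, mem_factorSet_iff]
  constructor
  · rintro ⟨-, ⟨i, rfl⟩, rfl⟩
    exact ⟨i, (take_factorAt_succ W i m).symm⟩
  · rintro ⟨i, rfl⟩
    exact ⟨_, ⟨i, rfl⟩, take_factorAt_succ W i m⟩

lemma ncard_factorSet_le_succ [Finite X] (m : ℕ) :
    (factorSet W m).ncard ≤ (factorSet W (m + 1)).ncard := by
  rw [← image_take_factorSet_succ]
  exact Set.ncard_image_le (factorSet_finite W _)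

lemma exists_ncard_factorSet_succ_eq [Finite X] {n : ℕ} (hn : (factorSet W n).ncard ≤ n) :
    ∃ m, (factorSet W (m + 1)).ncard = (factorSet W m).ncard := by
  by_contra! h
  have hgrowth : ∀ k, k + 1 ≤ (factorSet W k).ncard := by
    intro k
    induction k with
    | zero => simp [factorSet_zero]
    | succ k ih => have := (ncard_factorSet_le_succ W k).lt_of_ne' (h k); omega
  have := hgrowth n
  omega

lemma apply_add_eq_of_ncard_factorSet_succ_eq [Finite X] {m : ℕ}
    (hm : (factorSet W (m + 1)).ncard = (factorSet W m).ncard) {i j : ℕ}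
    (hij : FactorAt W i m = FactorAt W j m) : W (i + m) = W (j + m) := by
  have hinj : Set.InjOn (List.take m) (factorSet W (m + 1)) :=
    Set.injOn_of_ncard_image_eq (by rw [image_take_factorSet_succ, hm]) (factorSet_finite W _)
  have hext : FactorAt W i (m + 1) = FactorAt W j (m + 1) :=
    hinj (factorAt_mem_factorSet W i _) (factorAt_mem_factorSet W j _)
      (by rw [take_factorAt_succ, take_factorAt_succ, hij])
  exact (factorAt_eq_factorAt_iff W).1 hext m m.lt_succ_self

variable {W}

lemma factorAt_add_eq_of_determined {m : ℕ}
    (hdet : ∀ i j, FactorAt W i m = FactorAt W j m → W (i + m) = W (j + m))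
    {i j : ℕ} (hij : FactorAt W i m = FactorAt W j m) (k : ℕ) :
    FactorAt W (i + k) m = FactorAt W (j + k) m := by
  induction k with
  | zero => exact hij
  | succ k ih =>
    rw [factorAt_eq_factorAt_iff] at ih ⊢
    intro t ht
    rcases Nat.lt_or_ge (t + 1) m with ht' | ht'
    · simpa only [add_assoc, add_comm 1 t] using ih (t + 1) ht'
    · obtain rfl : m = t + 1 := by omega
      simpa only [add_assoc, add_comm 1 t] using hdet _ _ ((factorAt_eq_factorAt_iff W).2 ih)

lemma ultPeriodic_of_determined [Finite X] {m : ℕ}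
    (hdet : ∀ i j, FactorAt W i m = FactorAt W j m → W (i + m) = W (j + m)) :
    UltPeriodic W := by
  obtain ⟨a, b, hab, hfac⟩ := (factorSet_finite W m).exists_lt_map_eq_of_forall_mem
    (f := fun i => FactorAt W i m) (factorAt_mem_factorSet W · m)
  refine ⟨a + m, b - a, by omega, fun i hi => ?_⟩
  obtain ⟨k, rfl⟩ := Nat.exists_eq_add_of_le hi
  calc W (a + m + k + (b - a)) = W (b + k + m) := by congr 1; omega
    _ = W (a + k + m) := (hdet _ _ (factorAt_add_eq_of_determined hdet hfac k)).symm
    _ = W (a + m + k) := by rw [add_right_comm]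

end Complexity

/-- If a right infinite word over a finite alphabet has at most `n` distinct subwords of
length `n` for some `n`, then it is ultimately periodic. -/
theorem ultimately_periodic_of_low_complexity {X : Type*} [Fintype X] (W : ℕ → X)
    (n : ℕ)
    (hn : {u : List X | u.length = n ∧ IsFactor W u}.ncard ≤ n) :
    UltPeriodic W := by
  obtain ⟨m, hm⟩ := exists_ncard_factorSet_succ_eq W hn
  exact ultPeriodic_of_determined fun _ _ => apply_add_eq_of_ncard_factorSet_succ_eq W hm
end

section
/- Let A = ⊕_{i≥0} A_i be a finitely generated graded prime K-algebra, let I be an ideal of A containing no nonzero homogeneous element, and suppose x ∈ A is nonzero homogeneous, y ∈ A is a sum of homogeneous elements of degree strictly less than deg(x), x + y ∈ I, and z is an element of the extended centre Z of A with zx = y. Then z is not algebraic over K. -/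
/-!
Since `z` is central, `z ^ k * f (x a₁ x ⋯ aₙ x)` is the image of the element obtained by
replacing the first `k` copies of `x` by `y`, and `z ^ k * (z + 1) * f (x a₁ x ⋯ aₙ x)` is the
image of an element of `I` whenever `k ≤ n` (the `(k+1)`-st copy of `x` becomes `x + y ∈ I`).
Here `z + 1 ≠ 0` because `f` is injective and `x + y` has degree-`m` component `x`.
If `z` were algebraic, `K[z]` would be a subfield of the extended centre, so
`(z + 1)⁻¹ = p(z)` for a polynomial `p` of degree `d`; expanding `f t = (z + 1) * p(z) * f t`
then puts every such product `t` with `d + 1` copies of `x` into `I`.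
For homogeneous `aᵢ` these products are homogeneous, hence zero, and primeness peels off the
copies of `x` one at a time until `x = 0`.
-/

open Polynomial

theorem exists_aeval_mul_eq_one_of_isAlgebraic {K Q : Type*} [Field K] [Ring Q] [Algebra K Q]
    (hZ : IsField (Subring.center Q)) {z : Q} (hz : z ∈ Subring.center Q)
    (halg : IsAlgebraic K z) {q : K[X]} (hq : aeval z q ≠ 0) :
    ∃ p : K[X], aeval z q * aeval z p = 1 := by
  have hZ' : IsField (Subalgebra.center K Q) := hZ
  let _ : Field (Subalgebra.center K Q) := hZ'.toField
  let z' : Subalgebra.center K Q := ⟨z, hz⟩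
  have hval (r : K[X]) : (aeval z' r : Q) = aeval z r :=
    (aeval_algHom_apply (Subalgebra.center K Q).val z' r).symm
  have halg' : IsAlgebraic K z' :=
    (isAlgebraic_algHom_iff (Subalgebra.center K Q).val Subtype.val_injective).1 halg
  have hq' : aeval z' q ≠ 0 := fun h => hq <| by
    rw [← hval, h]
    rfl
  have hadj := IntermediateField.adjoin_simple_toSubalgebra_of_isAlgebraic halg'
  have hmem : aeval z' q ∈ IntermediateField.adjoin K {z'} := by
    rw [← IntermediateField.mem_toSubalgebra, hadj]
    exact aeval_mem_adjoin_singleton K z'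
  have hinv : (aeval z' q)⁻¹ ∈ (aeval (R := K) z').range := by
    rw [← Algebra.adjoin_singleton_eq_range_aeval, ← hadj]
    exact (IntermediateField.adjoin K {z'}).inv_mem hmem
  obtain ⟨p, hp⟩ := hinv
  have hp' : aeval z' p = (aeval z' q)⁻¹ := hp
  refine ⟨p, ?_⟩
  rw [← hval, ← hval, hp']
  exact congrArg Subtype.val (mul_inv_cancel₀ hq')

theorem add_ne_zero_of_decompose_eq_zero {ι K A : Type*} [DecidableEq ι] [Semiring K]
    [AddCommMonoid A] [Module K A] (𝒜 : ι → Submodule K A) [DirectSum.Decomposition 𝒜]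
    {m : ι} {x y : A} (hx : x ∈ 𝒜 m) (hx0 : x ≠ 0)
    (hy : (DirectSum.decompose 𝒜 y m : A) = 0) : x + y ≠ 0 := by
  intro h
  have hm := congrArg (fun a => (DirectSum.decompose 𝒜 a m : A)) h
  simp only [DirectSum.decompose_add, DirectSum.add_apply, Submodule.coe_add,
    DirectSum.decompose_of_mem_same 𝒜 hx, hy, add_zero, DirectSum.decompose_zero,
    DirectSum.zero_apply, ZeroMemClass.coe_zero] at hm
  exact hx0 hm

theorem eq_zero_of_forall_isHomogeneousElem_mul_mul_eq_zero {ι K A : Type*} [DecidableEq ι]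
    [Semiring K] [Ring A] [Module K A] (𝒜 : ι → Submodule K A) [DirectSum.Decomposition 𝒜]
    (hprime : ∀ a b : A, (∀ r : A, a * r * b = 0) → a = 0 ∨ b = 0) {x u : A} (hx0 : x ≠ 0)
    (h : ∀ a, SetLike.IsHomogeneousElem 𝒜 a → x * a * u = 0) : u = 0 := by
  classical
  refine (hprime x u fun r => ?_).resolve_left hx0
  rw [← DirectSum.sum_support_decompose 𝒜 r, Finset.mul_sum, Finset.sum_mul]
  exact Finset.sum_eq_zero fun i _ => h _ (SetLike.isHomogeneousElem_coe _)

section LiftsCentralPowers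

variable {K A Q : Type*} [CommSemiring K] [Ring A] [Algebra K A] [Ring Q] [Algebra K Q]
  (f : A →ₐ[K] Q) (I : TwoSidedIdeal A) (z : Q)

/-- The properties of `x a₁ x ⋯ aₙ₋₁ x` (with `n` copies of `x`) under `z * f x = f y`,
`x + y ∈ I` that survive multiplication. -/
structure LiftsCentralPowers (n : ℕ) (u : A) : Prop where
  pow_mul_mem : ∀ k ≤ n, ∃ v, f v = z ^ k * f u
  pow_mul_add_one_mul_mem : ∀ k < n, ∃ v ∈ I, f v = z ^ k * (z + 1) * f u

variable {f I z}

theorem liftsCentralPowers_zero (u : A) : LiftsCentralPowers f I z 0 u where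
  pow_mul_mem k hk := ⟨u, by rw [Nat.le_zero.1 hk, pow_zero, one_mul]⟩
  pow_mul_add_one_mul_mem k hk := absurd hk k.not_lt_zero

theorem liftsCentralPowers_one {x y : A} (hxy : x + y ∈ I) (hzx : z * f x = f y) :
    LiftsCentralPowers f I z 1 x where
  pow_mul_mem k hk := by
    rcases Nat.le_one_iff_eq_zero_or_eq_one.1 hk with rfl | rfl
    · exact ⟨x, by rw [pow_zero, one_mul]⟩
    · exact ⟨y, by rw [pow_one, hzx]⟩
  pow_mul_add_one_mul_mem k hk := ⟨x + y, hxy, by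
    rw [Nat.lt_one_iff.1 hk, pow_zero, one_mul, add_mul, one_mul, hzx, map_add, add_comm]⟩

theorem LiftsCentralPowers.mul (hz : z ∈ Subring.center Q) {n n' : ℕ} {u u' : A}
    (hu : LiftsCentralPowers f I z n u) (hu' : LiftsCentralPowers f I z n' u') :
    LiftsCentralPowers f I z (n + n') (u * u') := by
  have hcomm : ∀ c ∈ Subring.center Q, ∀ j,
      z ^ (n + j) * c * f (u * u') = z ^ n * f u * (z ^ j * c * f u') := by
    intro c hc j
    have hjc : z ^ j * c ∈ Subring.center Q := Subring.mul_mem _ (Subring.pow_mem _ hz j) hc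
    calc z ^ (n + j) * c * f (u * u') = z ^ n * (z ^ j * c * f u) * f u' := by
          simp only [map_mul, pow_add, mul_assoc]
      _ = z ^ n * (f u * (z ^ j * c)) * f u' := by rw [Subring.mem_center_iff.1 hjc]
      _ = z ^ n * f u * (z ^ j * c * f u') := by simp only [mul_assoc]
  constructor
  · intro k hk
    rcases le_or_gt k n with hkn | hkn
    · obtain ⟨v, hv⟩ := hu.pow_mul_mem k hkn
      exact ⟨v * u', by rw [map_mul, hv, map_mul, mul_assoc]⟩
    · obtain ⟨j, rfl⟩ := Nat.exists_eq_add_of_le hkn.le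
      obtain ⟨v, hv⟩ := hu.pow_mul_mem n le_rfl
      obtain ⟨v', hv'⟩ := hu'.pow_mul_mem j (by omega)
      refine ⟨v * v', ?_⟩
      have := hcomm 1 (Subring.one_mem _) j
      rw [mul_one, mul_one] at this
      rw [this, map_mul, hv, hv']
  · intro k hk
    have hz1 : z + 1 ∈ Subring.center Q := Subring.add_mem _ hz (Subring.one_mem _)
    rcases lt_or_ge k n with hkn | hkn
    · obtain ⟨v, hvI, hv⟩ := hu.pow_mul_add_one_mul_mem k hkn
      exact ⟨v * u', I.mul_mem_right _ _ hvI, by rw [map_mul, hv, map_mul, mul_assoc]⟩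
    · obtain ⟨j, rfl⟩ := Nat.exists_eq_add_of_le hkn
      obtain ⟨v, hv⟩ := hu.pow_mul_mem n le_rfl
      obtain ⟨v', hv'I, hv'⟩ := hu'.pow_mul_add_one_mul_mem j (by omega)
      exact ⟨v * v', I.mul_mem_left _ _ hv'I, by rw [hcomm _ hz1 j, map_mul, hv, hv']⟩

theorem LiftsCentralPowers.mem_of_natDegree_lt (hf : Function.Injective f) {p : K[X]}
    (hp : (z + 1) * aeval z p = 1) {n : ℕ} {u : A} (hu : LiftsCentralPowers f I z n u)
    (hn : p.natDegree < n) : u ∈ I := by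
  let J : Submodule K Q := (I.asIdeal.restrictScalars K).map f.toLinearMap
  have hJ : ∀ k < n, z ^ k * (z + 1) * f u ∈ J := fun k hk => by
    obtain ⟨v, hvI, hv⟩ := hu.pow_mul_add_one_mul_mem k hk
    exact ⟨v, I.mem_asIdeal.2 hvI, hv⟩
  have hexpand : f u = ∑ k ∈ Finset.range n, p.coeff k • (z ^ k * (z + 1) * f u) := by
    calc f u = (z + 1) * aeval z p * f u := by rw [hp, one_mul]
      _ = _ := by
        rw [aeval_eq_sum_range' hn, Finset.mul_sum, Finset.sum_mul]
        refine Finset.sum_congr rfl fun k _ => ?_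
        rw [mul_smul_comm, smul_mul_assoc, ((Commute.self_pow z k).add_left
          (Commute.one_left _)).eq]
  obtain ⟨v, hvI, hv⟩ : f u ∈ J := hexpand ▸
    Submodule.sum_mem _ fun k hk => J.smul_mem _ (hJ k (Finset.mem_range.1 hk))
  exact hf hv ▸ I.mem_asIdeal.1 hvI

theorem LiftsCentralPowers.eq_zero {ι : Type*} [DecidableEq ι] [AddMonoid ι]
    (𝒜 : ι → Submodule K A) [GradedAlgebra 𝒜]
    (hprime : ∀ a b : A, (∀ r : A, a * r * b = 0) → a = 0 ∨ b = 0)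
    (hI : ∀ a ∈ I, ∀ i, a ∈ 𝒜 i → a = 0) (hz : z ∈ Subring.center Q) {x : A}
    (hx : LiftsCentralPowers f I z 1 x) (hxh : SetLike.IsHomogeneousElem 𝒜 x) (hx0 : x ≠ 0)
    {N : ℕ} (hN : ∀ u, LiftsCentralPowers f I z N u → u ∈ I) {n : ℕ} {u : A}
    (hu : LiftsCentralPowers f I z n u) (huh : SetLike.IsHomogeneousElem 𝒜 u) (hn : n ≤ N) :
    u = 0 := by
  obtain ⟨k, rfl⟩ := Nat.exists_eq_add_of_le hn
  clear hn
  induction k generalizing n u with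
  | zero =>
    obtain ⟨i, hi⟩ := huh
    exact hI u (hN u hu) i hi
  | succ k ih =>
    refine eq_zero_of_forall_isHomogeneousElem_mul_mul_eq_zero 𝒜 hprime hx0 fun a ha => ?_
    have hxau : LiftsCentralPowers f I z (n + 1) (x * a * u) := by
      have := (hx.mul hz (liftsCentralPowers_zero a)).mul hz hu
      rwa [show 1 + 0 + n = n + 1 by omega] at this
    exact ih hxau ((hxh.mul ha).mul huh) (by rwa [show n + 1 + k = n + (k + 1) by omega])

end LiftsCentralPowers

theorem extended_centre_element_not_algebraic_general
    {K : Type*} [Field K] {A : Type*} [Ring A] [Algebra K A]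
    (𝒜 : ℕ → Submodule K A) [GradedAlgebra 𝒜]
    (hprime : ∀ a b : A, (∀ r : A, a * r * b = 0) → a = 0 ∨ b = 0)
    {Q : Type*} [Ring Q] [Algebra K Q]
    (f : A →ₐ[K] Q) (hf : Function.Injective f)
    (hZ : IsField (Subring.center Q))
    (I : TwoSidedIdeal A)
    (hI : ∀ a ∈ I, ∀ i : ℕ, a ∈ 𝒜 i → a = 0)
    (m : ℕ) (x y : A) (hx : x ∈ 𝒜 m) (hx0 : x ≠ 0)
    (hy : ∀ i : ℕ, m ≤ i → ((DirectSum.decompose 𝒜 y) i : A) = 0)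
    (hxy : x + y ∈ I)
    (z : Q) (hz : z ∈ Subring.center Q) (hzx : z * f x = f y) :
    ¬ IsAlgebraic K z := by
  intro halg
  have hxh : SetLike.IsHomogeneousElem 𝒜 x := ⟨m, hx⟩
  have hx1 : LiftsCentralPowers f I z 1 x := liftsCentralPowers_one hxy hzx
  have hz1 : z + 1 ≠ 0 := by
    intro h
    refine add_ne_zero_of_decompose_eq_zero 𝒜 hx hx0 (hy m le_rfl) (hf ?_)
    rw [map_add, ← hzx, add_comm, ← add_one_mul, h, zero_mul, map_zero]
  obtain ⟨p, hp⟩ := exists_aeval_mul_eq_one_of_isAlgebraic (q := X + 1) hZ hz halg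
    (by rwa [map_add, aeval_X, map_one])
  rw [map_add, aeval_X, map_one] at hp
  have hmem : ∀ u, LiftsCentralPowers f I z (p.natDegree + 1) u → u ∈ I :=
    fun u hu => hu.mem_of_natDegree_lt hf hp p.natDegree.lt_succ_self
  exact hx0 (hx1.eq_zero 𝒜 hprime hI hz hxh hx0 hmem hx1 hxh (by omega))

/-- Lemma on the extended centre: Let `A` be a finitely generated graded prime
`K`-algebra, embedded in a ring `Q` (e.g. its Martindale quotient ring) whose centre is
a field (the extended centre `Z` of `A`).  Let `I` be a two-sided ideal of `A`
containing no nonzero homogeneous element, `x` a nonzero homogeneous element of degree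
`m`, `y` a sum of homogeneous elements of degrees `< m`, with `x + y ∈ I`, and suppose
`z ∈ Z` satisfies `z·x = y`.  Then `z` is not algebraic over `K`. -/
theorem extended_centre_element_not_algebraic
    {K : Type*} [Field K] {A : Type*} [Ring A] [Algebra K A]
    (𝒜 : ℕ → Submodule K A) [GradedAlgebra 𝒜]
    (hfg : Algebra.FiniteType K A)
    (hprime : ∀ a b : A, (∀ r : A, a * r * b = 0) → a = 0 ∨ b = 0)
    {Q : Type*} [Ring Q] [Algebra K Q]
    (f : A →ₐ[K] Q) (hf : Function.Injective f)
    (hZ : IsField (Subring.center Q))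
    (I : TwoSidedIdeal A)
    (hI : ∀ a ∈ I, ∀ i : ℕ, a ∈ 𝒜 i → a = 0)
    (m : ℕ) (x y : A) (hx : x ∈ 𝒜 m) (hx0 : x ≠ 0)
    (hy : ∀ i : ℕ, m ≤ i → ((DirectSum.decompose 𝒜 y) i : A) = 0)
    (hxy : x + y ∈ I)
    (z : Q) (hz : z ∈ Subring.center Q) (hzx : z * f x = f y) :
    ¬ IsAlgebraic K z :=
  extended_centre_element_not_algebraic_general 𝒜 hprime f hf hZ I hI m x y hx hx0 hy hxy z hz hzx
end
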